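/- Let ν(z, z̄) = Σ_{j,k≥0} a_{jk} z^j z̄^k be real analytic near 0, write ν = g + Λ with g(z) = Σ_j a_{j0} z^j holomorphic and Λ(z,z̄) = Σ_{k≥1}(Σ_j a_{jk} z^j) z̄^k. Let n ∈ ℕ and define H(z,z̄) = Λ_{zz} - (n/z)Λ_z - 2g'(z)Λ_z - (Λ_z)². If z² H(z,z̄) is holomorphic in z (i.e. ∂_{z̄}(z² H) = 0) in a punctured neighborhood of 0, then H ≡ 0 there. -/

import Mathlib

open Complex

/-- Wirtinger derivative `∂f/∂z = (∂f/∂x - i ∂f/∂y)/2`. -/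
noncomputable def wderiv (f : ℂ → ℂ) (z : ℂ) : ℂ :=
  (1/2 : ℂ) * (fderiv ℝ f z 1 - Complex.I * fderiv ℝ f z Complex.I)

/-- Conjugate Wirtinger derivative `∂f/∂z̄ = (∂f/∂x + i ∂f/∂y)/2`. -/
noncomputable def wbarderiv (f : ℂ → ℂ) (z : ℂ) : ℂ :=
  (1/2 : ℂ) * (fderiv ℝ f z 1 + Complex.I * fderiv ℝ f z Complex.I)

/-!
Write `Λ(z) = Φ(z, z̄)` with `Φ(z, w) = ∑ₖ cₖ(z) w^(k+1)` holomorphic in both variables. Then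
`Λ_z` is `∂Φ/∂z` evaluated at `w = z̄`, and so `z²H(z) = Ψ(z, z̄)` for some `Ψ` holomorphic on a
bidisc with `Ψ(z, 0) = 0`. Suppose `f(z) = Ψ(z, z̄)` is holomorphic on `0 < |z| < s`. On the
circle `|z| = ρ` we have `z̄ = ρ²/z`, so by the identity theorem `f(z) = Ψ(z, ρ²/z)` on the whole
annulus `ρ²/s < |z| < s`. Letting `ρ → 0` with `z` fixed gives `f(z) = Ψ(z, 0) = 0`.
-/

open ComplexConjugate Metric Filter Set Topology

section Wirtinger

variable {Φ : ℂ × ℂ → ℂ} {D : ℂ × ℂ →L[ℂ] ℂ} {z : ℂ}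

lemma hasFDerivAt_comp_conj (h : HasFDerivAt Φ D (z, conj z)) :
    HasFDerivAt (fun w => Φ (w, conj w))
      (D (1, 0) • ContinuousLinearMap.id ℝ ℂ + D (0, 1) • conjCLE.toContinuousLinearMap) z := by
  have hL := ((ContinuousLinearMap.id ℝ ℂ).prod conjCLE.toContinuousLinearMap).hasFDerivAt (x := z)
  refine ((h.restrictScalars ℝ).comp z hL).congr_fderiv ?_
  ext v
  have hv : (v, conj v) = v • ((1 : ℂ), (0 : ℂ)) + conj v • ((0 : ℂ), (1 : ℂ)) := by
    ext <;> simp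
  simp only [ContinuousLinearMap.coe_comp, Function.comp_apply, ContinuousLinearMap.prod_apply,
    ContinuousLinearMap.coe_restrictScalars', ContinuousLinearMap.coe_id', id_eq,
    ContinuousLinearEquiv.coe_coe, conjCLE_apply]
  rw [hv, map_add, map_smul, map_smul]
  simp [mul_comm]

lemma wderiv_comp_conj (h : HasFDerivAt Φ D (z, conj z)) :
    wderiv (fun w => Φ (w, conj w)) z = D (1, 0) := by
  rw [wderiv, (hasFDerivAt_comp_conj h).fderiv]
  simp
  linear_combination (D (0, 1) - D (1, 0)) / 2 * I_sq

lemma wbarderiv_comp_conj (h : HasFDerivAt Φ D (z, conj z)) :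
    wbarderiv (fun w => Φ (w, conj w)) z = D (0, 1) := by
  rw [wbarderiv, (hasFDerivAt_comp_conj h).fderiv]
  simp
  linear_combination (D (1, 0) - D (0, 1)) / 2 * I_sq

lemma differentiableAt_comp_conj (h : DifferentiableAt ℂ Φ (z, conj z))
    (h0 : wbarderiv (fun w => Φ (w, conj w)) z = 0) :
    DifferentiableAt ℂ (fun w => Φ (w, conj w)) z := by
  rw [wbarderiv_comp_conj h.hasFDerivAt] at h0
  have hD : HasDerivAt (fun w => Φ (w, conj w)) (fderiv ℂ Φ (z, conj z) (1, 0)) z :=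
    hasFDerivAt_of_restrictScalars ℝ (hasFDerivAt_comp_conj h.hasFDerivAt) <| by
      ext
      simp [h0, mul_comm]
  exact hD.differentiableAt

lemma Filter.EventuallyEq.wderiv_eq {f g : ℂ → ℂ} (h : f =ᶠ[𝓝 z] g) :
    wderiv f z = wderiv g z := by
  rw [wderiv, wderiv, h.fderiv_eq]

lemma Filter.EventuallyEq.wbarderiv_eq {f g : ℂ → ℂ} (h : f =ᶠ[𝓝 z] g) :
    wbarderiv f z = wbarderiv g z := by
  rw [wbarderiv, wbarderiv, h.fderiv_eq]

end Wirtinger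

lemma conj_eq_sq_div_of_norm_eq {w : ℂ} {ρ : ℝ} (hw : ‖w‖ = ρ) (hw0 : w ≠ 0) :
    conj w = (ρ : ℂ) ^ 2 / w := by
  rw [eq_div_iff hw0, mul_comm, mul_conj', hw]

lemma isOpen_annulus {E : Type*} [SeminormedAddCommGroup E] (a b : ℝ) :
    IsOpen {x : E | a < ‖x‖ ∧ ‖x‖ < b} :=
  (isOpen_lt continuous_const continuous_norm).inter (isOpen_lt continuous_norm continuous_const)

lemma isPreconnected_annulus {E : Type*} [NormedAddCommGroup E] [NormedSpace ℝ E]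
    (h : 1 < Module.rank ℝ E) {a b : ℝ} (ha : 0 ≤ a) :
    IsPreconnected {x : E | a < ‖x‖ ∧ ‖x‖ < b} := by
  have himage : {x : E | a < ‖x‖ ∧ ‖x‖ < b} =
      (fun p : ℝ × E => p.1 • p.2) '' (Ioo a b ×ˢ sphere 0 1) := by
    ext x
    constructor
    · rintro ⟨hax, hxb⟩
      have hx : ‖x‖ ≠ 0 := (ha.trans_lt hax).ne'
      refine ⟨(‖x‖, ‖x‖⁻¹ • x), ⟨⟨hax, hxb⟩, ?_⟩, ?_⟩
      · simp [norm_smul, hx]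
      · simp [smul_smul, hx]
    · rintro ⟨⟨t, u⟩, ⟨⟨hat, htb⟩, hu⟩, rfl⟩
      have ht : ‖t • u‖ = t := by
        rw [norm_smul, mem_sphere_zero_iff_norm.mp hu, mul_one,
          Real.norm_of_nonneg (ha.trans hat.le)]
      exact ⟨ht.symm ▸ hat, ht.symm ▸ htb⟩
  rw [himage]
  exact (isPreconnected_Ioo.prod (isPreconnected_sphere h 0 1)).image _
    (continuous_fst.smul continuous_snd).continuousOn

lemma eqOn_of_eqOn_sphere {f g : ℂ → ℂ} {U : Set ℂ} {ρ : ℝ} (hU : IsOpen U)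
    (hU' : IsPreconnected U) (hf : DifferentiableOn ℂ f U) (hg : DifferentiableOn ℂ g U)
    (hρ : 0 < ρ) (hρU : (ρ : ℂ) ∈ U) (hfg : EqOn f g (U ∩ sphere 0 ρ)) : EqOn f g U := by
  set γ : ℝ → ℂ := fun θ => ρ * exp (θ * I)
  have hγ : HasDerivAt γ (ρ * I) 0 := by
    simpa using ((hasDerivAt_id (0 : ℝ)).ofReal_comp.mul_const I).cexp.const_mul (ρ : ℂ)
  have hγ0 : γ 0 = ρ := by simp [γ]
  have hγU : ∀ᶠ θ in 𝓝[≠] 0, γ θ ∈ U :=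
    nhdsWithin_le_nhds (hγ.continuousAt.preimage_mem_nhds (hγ0 ▸ hU.mem_nhds hρU))
  have hfreq : ∃ᶠ w in 𝓝[≠] (ρ : ℂ), f w = g w := by
    refine hγ0 ▸ (hγ.tendsto_nhdsNE (by simp [hρ.ne'])).frequently ?_
    refine (hγU.mono fun θ hθ => hfg ⟨hθ, ?_⟩).frequently
    simp [γ, norm_exp_ofReal_mul_I, abs_of_pos hρ]
  exact (hf.analyticOnNhd hU).eqOn_of_preconnected_of_frequently_eq (hg.analyticOnNhd hU) hU'
    hρU hfreq

lemma prodMk_mem_ball_zero {E F : Type*} [SeminormedAddCommGroup E] [SeminormedAddCommGroup F]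
    {x : E} {y : F} {s : ℝ} (hx : ‖x‖ < s) (hy : ‖y‖ < s) : (x, y) ∈ ball (0 : E × F) s := by
  simpa [Prod.norm_def] using And.intro hx hy

lemma comp_conj_eqOn_annulus {Ψ : ℂ × ℂ → ℂ} {s ρ : ℝ} (hΨ : DifferentiableOn ℂ Ψ (ball 0 s))
    (hf : DifferentiableOn ℂ (fun w => Ψ (w, conj w)) {w | 0 < ‖w‖ ∧ ‖w‖ < s})
    (hρ : 0 < ρ) (hρs : ρ < s) :
    EqOn (fun w => Ψ (w, conj w)) (fun w => Ψ (w, (ρ : ℂ) ^ 2 / w))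
      {w | ρ ^ 2 / s < ‖w‖ ∧ ‖w‖ < s} := by
  have hs : 0 < s := hρ.trans hρs
  have hpos : 0 < ρ ^ 2 / s := by positivity
  have hne : ∀ w ∈ {w : ℂ | ρ ^ 2 / s < ‖w‖ ∧ ‖w‖ < s}, w ≠ 0 := fun w hw =>
    norm_pos_iff.mp (hpos.trans hw.1)
  refine eqOn_of_eqOn_sphere (isOpen_annulus _ _) (isPreconnected_annulus (by simp) hpos.le)
    (hf.mono fun w hw => ⟨hpos.trans hw.1, hw.2⟩) ?_ hρ ?_ fun w ⟨hw, hwρ⟩ => ?_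
  · refine hΨ.comp (differentiableOn_id.prodMk
      ((differentiableOn_const _).div differentiableOn_id hne)) fun w hw =>
        prodMk_mem_ball_zero hw.2 ?_
    have h1 := hw.1
    rw [div_lt_iff₀ hs] at h1
    rw [norm_div, norm_pow, norm_real, Real.norm_of_nonneg hρ.le, div_lt_iff₀ (hpos.trans hw.1)]
    linarith
  · show ρ ^ 2 / s < ‖(ρ : ℂ)‖ ∧ ‖(ρ : ℂ)‖ < s
    rw [norm_real, Real.norm_of_nonneg hρ.le, div_lt_iff₀ hs]
    exact ⟨by nlinarith, hρs⟩
  · simp only [conj_eq_sq_div_of_norm_eq (mem_sphere_zero_iff_norm.mp hwρ) (hne w hw)]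

theorem comp_conj_eq_zero_of_wbarderiv_eq_zero {Ψ : ℂ × ℂ → ℂ} {s : ℝ}
    (hΨ : DifferentiableOn ℂ Ψ (ball 0 s)) (hΨ0 : ∀ z ∈ ball (0 : ℂ) s, Ψ (z, 0) = 0)
    (hhol : ∀ z ∈ ball (0 : ℂ) s, z ≠ 0 → wbarderiv (fun w => Ψ (w, conj w)) z = 0) :
    ∀ z ∈ ball (0 : ℂ) s, z ≠ 0 → Ψ (z, conj z) = 0 := by
  have hf : DifferentiableOn ℂ (fun w => Ψ (w, conj w)) {w | 0 < ‖w‖ ∧ ‖w‖ < s} := by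
    intro w ⟨hw0, hw⟩
    have hwmem := prodMk_mem_ball_zero hw (by simpa using hw : ‖conj w‖ < s)
    exact (differentiableAt_comp_conj (hΨ.differentiableAt (isOpen_ball.mem_nhds hwmem))
      (hhol w (mem_ball_zero_iff.mpr hw) (norm_pos_iff.mp hw0))).differentiableWithinAt
  intro z hz hz0
  rw [mem_ball_zero_iff] at hz
  have hs : 0 < s := (norm_nonneg z).trans_lt hz
  have hev : ∀ᶠ ρ : ℝ in 𝓝[>] 0, Ψ (z, (ρ : ℂ) ^ 2 / z) = Ψ (z, conj z) := by
    filter_upwards [Ioo_mem_nhdsGT (lt_min hs (norm_pos_iff.mpr hz0))] with ρ ⟨hρ, hρm⟩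
    obtain ⟨hρs, hρz⟩ := lt_min_iff.mp hρm
    refine (comp_conj_eqOn_annulus hΨ hf hρ hρs ⟨?_, hz⟩).symm
    rw [div_lt_iff₀ hs]
    nlinarith
  have hlim : Tendsto (fun ρ : ℝ => Ψ (z, (ρ : ℂ) ^ 2 / z)) (𝓝[>] 0) (𝓝 0) := by
    rw [← hΨ0 z (mem_ball_zero_iff.mpr hz)]
    have hcont : ContinuousAt Ψ (z, 0) := hΨ.continuousOn.continuousAt
      (isOpen_ball.mem_nhds (prodMk_mem_ball_zero hz (by simpa using hs)))
    refine hcont.tendsto.comp (tendsto_nhdsWithin_of_tendsto_nhds ?_)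
    have : Continuous fun ρ : ℝ => (z, (ρ : ℂ) ^ 2 / z) := by fun_prop
    simpa using this.tendsto 0
  exact tendsto_nhds_unique tendsto_const_nhds (hlim.congr' hev)

lemma summable_succ_mul_geometric {q : ℝ} (hq0 : 0 ≤ q) (hq1 : q < 1) :
    Summable fun k : ℕ => ((k : ℝ) + 1) * q ^ k := by
  have hq : ‖q‖ < 1 := by rwa [Real.norm_of_nonneg hq0]
  refine ((summable_pow_mul_geometric_of_norm_lt_one 1 hq).add
    (summable_geometric_of_lt_one hq0 hq1)).congr fun k => ?_
  ring

section PowerSeries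

variable {β : ℕ → ℂ} {B r : ℝ}

lemma norm_mul_pow_le (hβ : ∀ j, ‖β j‖ ≤ B / r ^ j) (j : ℕ) {s : ℝ} {z : ℂ} (hz : ‖z‖ ≤ s) :
    ‖β j * z ^ j‖ ≤ B * (s / r) ^ j := by
  rw [norm_mul, norm_pow]
  calc ‖β j‖ * ‖z‖ ^ j ≤ B / r ^ j * s ^ j :=
        mul_le_mul (hβ j) (pow_le_pow_left₀ (norm_nonneg z) hz j) (by positivity)
          ((norm_nonneg _).trans (hβ j))
    _ = B * (s / r) ^ j := by rw [div_pow]; ring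

lemma norm_tsum_mul_pow_le (hβ : ∀ j, ‖β j‖ ≤ B / r ^ j) {s : ℝ} (hs : s < r) {z : ℂ}
    (hz : ‖z‖ ≤ s) : ‖∑' j, β j * z ^ j‖ ≤ B * (1 - s / r)⁻¹ := by
  have hs0 : 0 ≤ s := (norm_nonneg z).trans hz
  have hr : 0 < r := hs0.trans_lt hs
  exact tsum_of_norm_bounded ((hasSum_geometric_of_lt_one (by positivity)
    ((div_lt_one hr).mpr hs)).mul_left B) (norm_mul_pow_le hβ · hz)

lemma differentiableOn_tsum_mul_pow (hβ : ∀ j, ‖β j‖ ≤ B / r ^ j) :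
    DifferentiableOn ℂ (fun z => ∑' j, β j * z ^ j) (ball 0 r) := by
  intro z hz
  obtain ⟨s, hzs, hsr⟩ := exists_between (mem_ball_zero_iff.mp hz)
  have hs0 : 0 ≤ s := (norm_nonneg z).trans hzs.le
  have hgeom : Summable fun j : ℕ => B * (s / r) ^ j :=
    (summable_geometric_of_lt_one (div_nonneg hs0 (hs0.trans hsr.le))
      ((div_lt_one (hs0.trans_lt hsr)).mpr hsr)).mul_left B
  have hdiff := differentiableOn_tsum_of_summable_norm hgeom
    (fun j => ((differentiable_pow j).const_mul (β j)).differentiableOn) isOpen_ball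
    (fun j w hw => norm_mul_pow_le hβ j (mem_ball_zero_iff.mp hw).le)
  exact (hdiff.differentiableAt (isOpen_ball.mem_nhds (mem_ball_zero_iff.mpr hzs)))
    |>.differentiableWithinAt

end PowerSeries

lemma norm_le_tsum_div_pow {a : ℕ → ℕ → ℂ} {r : ℝ} (hr : 0 < r)
    (hsum : Summable fun p : ℕ × ℕ => ‖a p.1 p.2‖ * r ^ (p.1 + p.2)) (j k : ℕ) :
    ‖a j k‖ ≤ (∑' p : ℕ × ℕ, ‖a p.1 p.2‖ * r ^ (p.1 + p.2)) / r ^ (j + k) := by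
  rw [le_div_iff₀ (by positivity)]
  exact hsum.le_tsum (j, k) fun _ _ => by positivity

lemma hasFDerivAt_mul_pow_snd {f : ℂ → ℂ} {q : ℂ × ℂ} (hf : DifferentiableAt ℂ f q.1) (k : ℕ) :
    HasFDerivAt (fun q : ℂ × ℂ => f q.1 * q.2 ^ (k + 1))
      ((q.2 ^ (k + 1) * deriv f q.1) • ContinuousLinearMap.fst ℂ ℂ ℂ
        + (f q.1 * ((k + 1) * q.2 ^ k)) • ContinuousLinearMap.snd ℂ ℂ ℂ) q := by
  refine ((hf.hasDerivAt.comp_hasFDerivAt q hasFDerivAt_fst).mul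
    ((hasDerivAt_pow (k + 1) q.2).comp_hasFDerivAt q hasFDerivAt_snd)).congr_fderiv ?_
  ext <;> simp

lemma norm_smul_fst_add_smul_snd_le (a b : ℂ) :
    ‖a • ContinuousLinearMap.fst ℂ ℂ ℂ + b • ContinuousLinearMap.snd ℂ ℂ ℂ‖ ≤ ‖a‖ + ‖b‖ := by
  refine (norm_add_le _ _).trans (add_le_add ?_ ?_) <;> rw [norm_smul]
  exacts [mul_le_of_le_one_right (norm_nonneg _) (ContinuousLinearMap.norm_fst_le ..),
    mul_le_of_le_one_right (norm_nonneg _) (ContinuousLinearMap.norm_snd_le ..)]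

/-- Coefficients of `∑ₖ c k z * w ^ (k + 1)`; the bound makes the series converge on the bidisc of
radius `r`. -/
structure HolomorphicCoeffs (c : ℕ → ℂ → ℂ) (r : ℝ) : Prop where
  differentiableOn : ∀ k, DifferentiableOn ℂ (c k) (ball 0 r)
  bound : ∀ s < r, ∃ C, ∀ k z, ‖z‖ ≤ s → ‖c k z‖ ≤ C / r ^ k

noncomputable def antiSeries (c : ℕ → ℂ → ℂ) (p : ℂ × ℂ) : ℂ := ∑' k, c k p.1 * p.2 ^ (k + 1)

@[simp]
lemma antiSeries_zero_right (c : ℕ → ℂ → ℂ) (z : ℂ) : antiSeries c (z, 0) = 0 := by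
  simp [antiSeries]

theorem holomorphicCoeffs_of_norm_le {a : ℕ → ℕ → ℂ} {T r : ℝ}
    (ha : ∀ j k, ‖a j k‖ ≤ T / r ^ (j + k)) :
    HolomorphicCoeffs (fun k z => ∑' j, a j (k + 1) * z ^ j) r := by
  have hβ : ∀ k j, ‖a j (k + 1)‖ ≤ T / r ^ (k + 1) / r ^ j := fun k j => by
    rw [div_div, ← pow_add, add_comm (k + 1)]
    exact ha j (k + 1)
  refine ⟨fun k => differentiableOn_tsum_mul_pow (hβ k), fun s hs => ⟨T / r * (1 - s / r)⁻¹, ?_⟩⟩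
  intro k z hz
  refine (norm_tsum_mul_pow_le (hβ k) hs hz).trans_eq ?_
  rw [pow_succ]
  ring

namespace HolomorphicCoeffs

variable {c : ℕ → ℂ → ℂ} {r : ℝ}

theorem deriv (hc : HolomorphicCoeffs c r) : HolomorphicCoeffs (fun k => deriv (c k)) r where
  differentiableOn k := (hc.differentiableOn k).deriv isOpen_ball
  bound s hs := by
    obtain ⟨s', hss', hs'r⟩ := exists_between hs
    obtain ⟨C, hC⟩ := hc.bound s' hs'r
    refine ⟨C / (s' - s), fun k z hz => ?_⟩
    have hsub : closedBall z (s' - s) ⊆ ball 0 r :=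
      closedBall_subset_ball' (by rw [dist_zero_right]; linarith)
    have hsphere : ∀ w ∈ sphere z (s' - s), ‖c k w‖ ≤ C / r ^ k := fun w hw => hC k w <| by
      calc ‖w‖ ≤ ‖w - z‖ + ‖z‖ := norm_le_norm_sub_add w z
        _ ≤ s' := by rw [← dist_eq_norm, mem_sphere.mp hw]; linarith
    calc ‖_root_.deriv (c k) z‖ ≤ C / r ^ k / (s' - s) :=
          norm_deriv_le_of_forall_mem_sphere_norm_le (sub_pos.mpr hss')
            ((hc.differentiableOn k).diffContOnCl_ball hsub) hsphere
      _ = C / (s' - s) / r ^ k := div_right_comm _ _ _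

theorem exists_summable_bound_partialDeriv (hc : HolomorphicCoeffs c r) {t : ℝ} (ht0 : 0 < t)
    (ht : t < r) :
    ∃ u : ℕ → ℝ, Summable u ∧ ∀ k, ∀ q ∈ ball (0 : ℂ × ℂ) t,
      ‖q.2 ^ (k + 1) * _root_.deriv (c k) q.1‖ + ‖c k q.1 * ((k + 1) * q.2 ^ k)‖ ≤ u k := by
  obtain ⟨C, hC⟩ := hc.bound t ht
  obtain ⟨C', hC'⟩ := hc.deriv.bound t ht
  have hq0 : 0 ≤ t / r := div_nonneg ht0.le (ht0.trans ht).le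
  have hq1 : t / r < 1 := (div_lt_one (ht0.trans ht)).mpr ht
  refine ⟨fun k => (C' * t + C * (k + 1)) * (t / r) ^ k,
    (((summable_geometric_of_lt_one hq0 hq1).mul_left (C' * t)).add
      ((summable_succ_mul_geometric hq0 hq1).mul_left C)).congr fun k => by ring,
    fun k q hq => ?_⟩
  have hq' : ‖q‖ < t := mem_ball_zero_iff.mp hq
  have h1 : ‖q.1‖ ≤ t := (norm_fst_le q).trans hq'.le
  have h2 : ‖q.2‖ ≤ t := (norm_snd_le q).trans hq'.le
  have hk : ‖(k : ℂ) + 1‖ = k + 1 := by exact_mod_cast Complex.norm_natCast (k + 1)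
  have hCk := hC k _ h1
  have hC'k := hC' k _ h1
  calc ‖q.2 ^ (k + 1) * _root_.deriv (c k) q.1‖ + ‖c k q.1 * ((k + 1) * q.2 ^ k)‖
      ≤ t ^ (k + 1) * (C' / r ^ k) + C / r ^ k * ((k + 1) * t ^ k) := by
        simp only [norm_mul, norm_pow, hk]
        gcongr
        exact (norm_nonneg _).trans hCk
    _ = (C' * t + C * (k + 1)) * (t / r) ^ k := by
        rw [div_pow]
        field_simp
        ring

theorem hasFDerivAt_antiSeries (hc : HolomorphicCoeffs c r) {p : ℂ × ℂ} (hp : p ∈ ball 0 r) :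
    ∃ D : ℂ × ℂ →L[ℂ] ℂ,
      HasFDerivAt (antiSeries c) D p ∧ D (1, 0) = antiSeries (fun k => _root_.deriv (c k)) p := by
  obtain ⟨t, hpt, ht⟩ := exists_between (mem_ball_zero_iff.mp hp)
  rw [← mem_ball_zero_iff] at hpt
  have ht0 : 0 < t := (norm_nonneg p).trans_lt (mem_ball_zero_iff.mp hpt)
  obtain ⟨u, hu, hbound⟩ := hc.exists_summable_bound_partialDeriv ht0 ht
  let f' : ℕ → ℂ × ℂ → ℂ × ℂ →L[ℂ] ℂ := fun k q =>
    (q.2 ^ (k + 1) * _root_.deriv (c k) q.1) • ContinuousLinearMap.fst ℂ ℂ ℂ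
      + (c k q.1 * ((k + 1) * q.2 ^ k)) • ContinuousLinearMap.snd ℂ ℂ ℂ
  have hf' : ∀ k, ∀ q ∈ ball (0 : ℂ × ℂ) t,
      HasFDerivAt (fun q : ℂ × ℂ => c k q.1 * q.2 ^ (k + 1)) (f' k q) q := fun k q hq =>
    hasFDerivAt_mul_pow_snd ((hc.differentiableOn k).differentiableAt (isOpen_ball.mem_nhds
      (mem_ball_zero_iff.mpr ((norm_fst_le q).trans_lt ((mem_ball_zero_iff.mp hq).trans ht))))) k
  have hf'u : ∀ k, ∀ q ∈ ball (0 : ℂ × ℂ) t, ‖f' k q‖ ≤ u k := fun k q hq =>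
    (norm_smul_fst_add_smul_snd_le _ _).trans (hbound k q hq)
  have hD := hasFDerivAt_tsum_of_isPreconnected hu isOpen_ball (convex_ball 0 t).isPreconnected
    hf' hf'u (mem_ball_self ht0) (by simp) hpt
  refine ⟨_, hD, ?_⟩
  have happly := (ContinuousLinearMap.apply ℂ ℂ ((1 : ℂ), (0 : ℂ))).map_tsum
    (Summable.of_norm_bounded hu fun k => hf'u k p hpt)
  simp only [ContinuousLinearMap.apply_apply] at happly
  rw [happly]
  simp [f', antiSeries, mul_comm]

theorem differentiableOn_antiSeries (hc : HolomorphicCoeffs c r) :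
    DifferentiableOn ℂ (antiSeries c) (ball 0 r) := fun _p hp =>
  let ⟨_D, hD, _⟩ := hc.hasFDerivAt_antiSeries hp
  hD.differentiableAt.differentiableWithinAt

theorem wderiv_antiSeries (hc : HolomorphicCoeffs c r) {z : ℂ} (hz : z ∈ ball 0 r) :
    wderiv (fun w => antiSeries c (w, conj w)) z
      = antiSeries (fun k => _root_.deriv (c k)) (z, conj z) := by
  have hzmem := prodMk_mem_ball_zero (mem_ball_zero_iff.mp hz) (by simpa using hz : ‖conj z‖ < r)
  obtain ⟨D, hD, hD1⟩ := hc.hasFDerivAt_antiSeries hzmem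
  rw [wderiv_comp_conj hD, hD1]

theorem wderiv_wderiv_antiSeries (hc : HolomorphicCoeffs c r) {z : ℂ} (hz : z ∈ ball 0 r) :
    wderiv (fun w => wderiv (fun w => antiSeries c (w, conj w)) w) z
      = antiSeries (fun k => _root_.deriv (_root_.deriv (c k))) (z, conj z) :=
  Filter.EventuallyEq.wderiv_eq ((isOpen_ball.eventually_mem hz).mono
    fun _w hw => hc.wderiv_antiSeries hw) |>.trans (hc.deriv.wderiv_antiSeries hz)

end HolomorphicCoeffs

/-- Let `ν(z,z̄) = Σ a_{jk} z^j z̄^k` be real analytic near `0`, split as `ν = g + Λ` with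
`g(z) = Σ_j a_{j0} z^j` and `Λ` the part involving `z̄`.  Put
`H = Λ_zz - (n/z)Λ_z - 2g'Λ_z - (Λ_z)²`.  If `z²H` is holomorphic in `z` (its `∂/∂z̄`
vanishes) on a punctured neighborhood of `0`, then `H ≡ 0` there. -/
theorem antiholomorphic_part_vanishes
    (n : ℕ) (a : ℕ → ℕ → ℂ) (r : ℝ) (hr : 0 < r)
    (hsum : Summable (fun p : ℕ × ℕ => ‖a p.1 p.2‖ * r ^ (p.1 + p.2)))
    (g Λ H : ℂ → ℂ)
    (hgdef : ∀ z, g z = ∑' j : ℕ, a j 0 * z ^ j)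
    (hΛdef : ∀ z, Λ z = ∑' k : ℕ, (∑' j : ℕ, a j (k + 1) * z ^ j) *
      ((starRingEnd ℂ) z) ^ (k + 1))
    (hHdef : ∀ z, H z = wderiv (fun w => wderiv Λ w) z
      - ((n : ℂ) / z) * wderiv Λ z - 2 * deriv g z * wderiv Λ z - (wderiv Λ z)^2)
    (hhol : ∀ z ∈ Metric.ball (0:ℂ) r, z ≠ 0 →
      wbarderiv (fun w => w^2 * H w) z = 0) :
    ∀ z ∈ Metric.ball (0:ℂ) r, z ≠ 0 → H z = 0 := by
  have ha := norm_le_tsum_div_pow hr hsum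
  set c : ℕ → ℂ → ℂ := fun k z => ∑' j, a j (k + 1) * z ^ j
  have hc : HolomorphicCoeffs c r := holomorphicCoeffs_of_norm_le ha
  have hg : DifferentiableOn ℂ g (ball 0 r) :=
    funext hgdef ▸ differentiableOn_tsum_mul_pow fun j => by simpa using ha j 0
  obtain rfl : Λ = fun z => antiSeries c (z, conj z) := funext hΛdef
  set c₁ := fun k => deriv (c k)
  set Ψ : ℂ × ℂ → ℂ := fun p => p.1 ^ 2 * antiSeries (fun k => deriv (c₁ k)) p
    - n * p.1 * antiSeries c₁ p - 2 * deriv g p.1 * p.1 ^ 2 * antiSeries c₁ p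
    - p.1 ^ 2 * antiSeries c₁ p ^ 2
  have hHΨ : ∀ z ∈ ball (0 : ℂ) r, z ≠ 0 → z ^ 2 * H z = Ψ (z, conj z) := fun z hz hz0 => by
    rw [hHdef, hc.wderiv_antiSeries hz, hc.wderiv_wderiv_antiSeries hz]
    field_simp
    ring
  have hΨ : DifferentiableOn ℂ Ψ (ball 0 r) := by
    have h1 := hc.deriv.differentiableOn_antiSeries
    have h2 := hc.deriv.deriv.differentiableOn_antiSeries
    have hg' : DifferentiableOn ℂ (fun p : ℂ × ℂ => deriv g p.1) (ball 0 r) :=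
      (hg.deriv isOpen_ball).comp differentiableOn_fst fun p hp =>
        mem_ball_zero_iff.mpr ((norm_fst_le p).trans_lt (mem_ball_zero_iff.mp hp))
    fun_prop
  refine fun z hz hz0 => (pow_ne_zero 2 hz0).isUnit.mul_right_eq_zero.mp ?_
  rw [hHΨ z hz hz0]
  refine comp_conj_eq_zero_of_wbarderiv_eq_zero hΨ (by simp [Ψ]) (fun w hw hw0 => ?_) z hz hz0
  have hev : (fun w => w ^ 2 * H w) =ᶠ[𝓝 w] fun w => Ψ (w, conj w) :=
    ((isOpen_ball.sdiff isClosed_singleton).eventually_mem ⟨hw, hw0⟩).mono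
      fun v hv => hHΨ v hv.1 hv.2
  exact hev.wbarderiv_eq ▸ hhol w hw hw0
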